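/- Assume every smart contract SC_e in an atomic cross-chain transaction is redeemed only if SC_w's state is RD_auth at some point and refunded only if SC_w's state is RF_auth at some point, and SC_w's state machine only permits transitions P → RD_auth and P → RF_auth with no fork (i.e., the states of SC_w form a single linearly ordered trace). Then it cannot happen that one smart contract in the transaction is redeemed while another is refunded (all-or-nothing atomicity). -/

import Mathlib

/-- States of the coordination smart contract `SC_w`. -/
inductive WState
  | P | RD_auth | RF_auth
  deriving DecidableEq

/-- Transition relation of `SC_w`: only `P → RD_auth` and `P → RF_auth`. -/
def WTrans : WState → WState → Prop :=
  fun s s' => s = WState.P ∧ (s' = WState.RD_auth ∨ s' = WState.RF_auth)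

/-- Final states of an individual asset-transfer smart contract. -/
inductive CState
  | Published | Redeemed | Refunded
  deriving DecidableEq

/-! A step of `SC_w` leaves `P` and no step leaves the other states, so a fork-free trace has at
most two states and reaches at most one of `RD_auth`, `RF_auth`. -/

namespace WTrans

theorem right_ne_P {s s' : WState} (h : WTrans s s') : s' ≠ WState.P := by
  rcases h.2 with rfl | rfl <;> decide

theorem not_trans {s s' s'' : WState} (h : WTrans s s') : ¬ WTrans s' s'' :=
  fun h' => h.right_ne_P h'.1

theorem eq_of_mem_of_isChain {tr : List WState} (hchain : tr.IsChain WTrans) {a b : WState}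
    (ha : a ∈ tr) (hb : b ∈ tr) (haP : a ≠ WState.P) (hbP : b ≠ WState.P) : a = b := by
  match tr, hchain with
  | [], _ => nomatch ha
  | [_], _ =>
    rw [List.mem_singleton] at ha hb
    rw [ha, hb]
  | [s, _], hchain =>
    obtain rfl : s = WState.P := (List.isChain_pair.mp hchain).1
    simp_all
  | _ :: _ :: _ :: _, hchain =>
    rw [List.isChain_cons_cons, List.isChain_cons_cons] at hchain
    exact absurd hchain.2.1 hchain.1.not_trans

end WTrans

theorem atomicity_no_fork_general
    (Edge : Type) (status : Edge → CState)
    (tr : List WState)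
    (hchain : List.Chain' WTrans tr)
    (hredeem : ∀ e, status e = CState.Redeemed → WState.RD_auth ∈ tr)
    (hrefund : ∀ e, status e = CState.Refunded → WState.RF_auth ∈ tr) :
    ¬ ∃ e₁ e₂, status e₁ = CState.Redeemed ∧ status e₂ = CState.Refunded := by
  rintro ⟨e₁, e₂, h₁, h₂⟩
  have hauth : WState.RD_auth = WState.RF_auth :=
    WTrans.eq_of_mem_of_isChain hchain (hredeem e₁ h₁) (hrefund e₂ h₂) (by decide) (by decide)
  exact absurd hauth (by decide)

/-- All-or-nothing atomicity: if each contract is redeemed only when `RD_auth`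
occurs in `SC_w`'s (linear, fork-free) trace and refunded only when `RF_auth`
occurs in the trace, then no contract is redeemed while another is refunded. -/
theorem atomicity_no_fork
    (Edge : Type) (status : Edge → CState)
    (tr : List WState) (h0 : tr.head? = some WState.P)
    (hchain : List.Chain' WTrans tr)
    (hredeem : ∀ e, status e = CState.Redeemed → WState.RD_auth ∈ tr)
    (hrefund : ∀ e, status e = CState.Refunded → WState.RF_auth ∈ tr) :
    ¬ ∃ e₁ e₂, status e₁ = CState.Redeemed ∧ status e₂ = CState.Refunded :=
  atomicity_no_fork_general Edge status tr hchain hredeem hrefund
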